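/- arXiv:2507.22633 — 6 statements merged into one kernel-verified Lean document; each statement's English description precedes it below -/
import Mathlib

section
/- Let E and F be real Hilbert spaces and let G : E × F → ℝ be twice continuously differentiable. Assume that for every (R,H) and every v ∈ F, ⟨∇²_H G(R,H) v, v⟩ ≥ α‖v‖² with α > 0, and that the mixed second derivative ∇_R∇_H G(R,H) has operator norm at most L₂. Suppose H* : E → F is differentiable and satisfies ∇_H G(R, H*(R)) = 0 for all R ∈ E. Then for every R ∈ E, the Fréchet derivative of H* satisfies ‖DH*(R)‖ ≤ L₂/α. -/
open scoped RealInnerProductSpace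

variable {E F : Type*} [NormedAddCommGroup E] [InnerProductSpace ℝ E] [CompleteSpace E]
  [NormedAddCommGroup F] [InnerProductSpace ℝ F] [CompleteSpace F]

/-- Partial gradient of `G : E → F → ℝ` in the second variable, `∇_H G(R, H)`. -/
noncomputable def gradH (G : E → F → ℝ) (R : E) (H : F) : F :=
  gradient (fun H' => G R H') H

/-- Hessian of `G : E → F → ℝ` in the second variable, `∇²_H G(R, H) : F →L[ℝ] F`. -/
noncomputable def hessH (G : E → F → ℝ) (R : E) (H : F) : F →L[ℝ] F :=
  fderiv ℝ (fun H' => gradH G R H') H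

/-- Mixed second derivative `∇_R ∇_H G(R, H) : E →L[ℝ] F`. -/
noncomputable def mixedRH (G : E → F → ℝ) (R : E) (H : F) : E →L[ℝ] F :=
  fderiv ℝ (fun R' => gradH G R' H) R

/-!
Differentiating the identity `∇_H G(R, H*(R)) = 0` gives `∇²_H G · DH*(R) = -∇_R∇_H G`. Strong
monotonicity of the Hessian, `α‖u‖² ≤ ⟪∇²_H G u, u⟫ ≤ ‖∇²_H G u‖ ‖u‖`, makes it invert with norm at
most `1/α`, so `‖DH*(R)‖ ≤ ‖∇_R∇_H G‖ / α ≤ L₂ / α`.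
-/

section ImplicitDerivative

variable {𝕜 : Type*} [NontriviallyNormedField 𝕜] {X Y Z : Type*}
  [NormedAddCommGroup X] [NormedSpace 𝕜 X] [NormedAddCommGroup Y] [NormedSpace 𝕜 Y]
  [NormedAddCommGroup Z] [NormedSpace 𝕜 Z]

theorem fderiv_partial_right_comp_eq_neg_of_eventually_const {g : X → Y → Z} {h : X → Y}
    {x : X} {c : Z} (hg : DifferentiableAt 𝕜 (Function.uncurry g) (x, h x))
    (hh : DifferentiableAt 𝕜 h x) (hconst : ∀ᶠ x' in nhds x, g x' (h x') = c) :
    (fderiv 𝕜 (fun y => g x y) (h x)).comp (fderiv 𝕜 h x) =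
      -fderiv 𝕜 (fun x' => g x' (h x)) x := by
  set D := fderiv 𝕜 (Function.uncurry g) (x, h x)
  have hright : HasFDerivAt (fun y => g x y) (D.comp (ContinuousLinearMap.inr 𝕜 X Y)) (h x) :=
    hg.hasFDerivAt.comp (h x) (hasFDerivAt_prodMk_right x (h x))
  have hleft : HasFDerivAt (fun x' => g x' (h x)) (D.comp (ContinuousLinearMap.inl 𝕜 X Y)) x :=
    (hg.hasFDerivAt.comp x (hasFDerivAt_prodMk_left (𝕜 := 𝕜) x (h x)) :)
  have hchain : HasFDerivAt (fun x' => g x' (h x'))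
      (D.comp ((ContinuousLinearMap.id 𝕜 X).prod (fderiv 𝕜 h x))) x :=
    (hg.hasFDerivAt.comp x ((hasFDerivAt_id x).prodMk hh.hasFDerivAt) :)
  have hzero : D.comp ((ContinuousLinearMap.id 𝕜 X).prod (fderiv 𝕜 h x)) = 0 :=
    hchain.unique ((hasFDerivAt_const c x).congr_of_eventuallyEq hconst)
  rw [hright.fderiv, hleft.fderiv, eq_neg_iff_add_eq_zero, ← hzero]
  ext v
  simp only [add_apply, ContinuousLinearMap.comp_apply,
    ContinuousLinearMap.inr_apply, ContinuousLinearMap.inl_apply, ContinuousLinearMap.prod_apply,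
    ContinuousLinearMap.id_apply, ← map_add, Prod.mk_add_mk, add_zero, zero_add]

end ImplicitDerivative

section Coercive

variable {X Y : Type*} [NormedAddCommGroup X] [NormedSpace ℝ X]
  [NormedAddCommGroup Y] [InnerProductSpace ℝ Y]

theorem mul_norm_le_norm_apply_of_coercive {α : ℝ} {T : Y →L[ℝ] Y}
    (hT : ∀ v, α * ‖v‖ ^ 2 ≤ ⟪T v, v⟫) (v : Y) : α * ‖v‖ ≤ ‖T v‖ := by
  rcases (norm_nonneg v).eq_or_lt with hv | hv
  · simp [← hv]
  refine le_of_mul_le_mul_right ?_ hv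
  calc α * ‖v‖ * ‖v‖ = α * ‖v‖ ^ 2 := by ring
    _ ≤ ⟪T v, v⟫ := hT v
    _ ≤ ‖T v‖ * ‖v‖ := real_inner_le_norm _ _

theorem opNorm_le_opNorm_comp_div_of_coercive {α : ℝ} (hα : 0 < α) {T : Y →L[ℝ] Y}
    (hT : ∀ v, α * ‖v‖ ^ 2 ≤ ⟪T v, v⟫) (A : X →L[ℝ] Y) : ‖A‖ ≤ ‖T.comp A‖ / α := by
  refine A.opNorm_le_bound (by positivity) fun u => ?_
  rw [div_mul_eq_mul_div, le_div_iff₀' hα]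
  exact (mul_norm_le_norm_apply_of_coercive hT (A u)).trans ((T.comp A).le_opNorm u)

end Coercive

omit [CompleteSpace E] in
theorem gradH_eq_toDual_symm_fderiv_comp_inr {G : E → F → ℝ} {R : E} {H : F}
    (hG : DifferentiableAt ℝ (Function.uncurry G) (R, H)) :
    gradH G R H = (InnerProductSpace.toDual ℝ F).symm
      ((fderiv ℝ (Function.uncurry G) (R, H)).comp (ContinuousLinearMap.inr ℝ E F)) := by
  rw [gradH, gradient]
  exact congrArg _ (hG.hasFDerivAt.comp H (hasFDerivAt_prodMk_right R H)).fderiv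

omit [CompleteSpace E] in
theorem ContDiff.uncurry_gradH {G : E → F → ℝ} {n : WithTop ℕ∞}
    (hG : ContDiff ℝ (n + 1) (Function.uncurry G)) :
    ContDiff ℝ n (Function.uncurry (gradH G)) := by
  have hG1 : Differentiable ℝ (Function.uncurry G) := hG.differentiable (by simp)
  have hformula : Function.uncurry (gradH G) = fun p => (InnerProductSpace.toDual ℝ F).symm
      ((fderiv ℝ (Function.uncurry G) p).comp (ContinuousLinearMap.inr ℝ E F)) :=
    funext fun p => gradH_eq_toDual_symm_fderiv_comp_inr (hG1 p)
  rw [hformula]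
  exact (InnerProductSpace.toDual ℝ F).symm.contDiff.comp
    ((hG.fderiv_right le_rfl).clm_comp contDiff_const)

/-- inequality (10) in the proof of Proposition 1. If the Hessian in `H` of
`G` is `α`-positive definite and the mixed second derivative has operator norm at most `L₂`,
then the implicit solution map `H*` (with `∇_H G(R, H*(R)) = 0`) satisfies
`‖DH*(R)‖ ≤ L₂/α`. -/
theorem stmt3 (α L₂ : ℝ) (hα : 0 < α)
    (G : E → F → ℝ)
    (hGsmooth : ContDiff ℝ 2 (fun p : E × F => G p.1 p.2))
    (hhess_pos : ∀ (R : E) (H : F) (v : F), α * ‖v‖ ^ 2 ≤ ⟪hessH G R H v, v⟫)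
    (hmixed_bound : ∀ (R : E) (H : F), ‖mixedRH G R H‖ ≤ L₂)
    (Hstar : E → F) (hHstar : Differentiable ℝ Hstar)
    (hstat : ∀ R : E, gradH G R (Hstar R) = 0) :
    ∀ R : E, ‖fderiv ℝ Hstar R‖ ≤ L₂ / α := by
  intro R
  have hgrad : Differentiable ℝ (Function.uncurry (gradH G)) :=
    (ContDiff.uncurry_gradH (n := 1) hGsmooth).differentiable one_ne_zero
  have himplicit : (hessH G R (Hstar R)).comp (fderiv ℝ Hstar R) = -mixedRH G R (Hstar R) :=
    fderiv_partial_right_comp_eq_neg_of_eventually_const (hgrad _) (hHstar R)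
      (Filter.Eventually.of_forall hstat)
  calc ‖fderiv ℝ Hstar R‖ ≤ ‖(hessH G R (Hstar R)).comp (fderiv ℝ Hstar R)‖ / α :=
        opNorm_le_opNorm_comp_div_of_coercive hα (hhess_pos R (Hstar R)) _
    _ = ‖mixedRH G R (Hstar R)‖ / α := by rw [himplicit, norm_neg]
    _ ≤ L₂ / α := by gcongr; exact hmixed_bound R (Hstar R)
end

section
/- Let E be a real Hilbert space, h : E → ℝ a convex function, η' > 0, and g, R₀ ∈ E. Suppose R⁺ ∈ E is a minimizer over E of the function u ↦ ⟨g, u⟩ + h(u) + (1/(2η'))‖u − R₀‖². Set 𝒢̃ = (R₀ − R⁺)/η'. Then ⟨g, 𝒢̃⟩ ≥ ‖𝒢̃‖² + (1/η')(h(R⁺) − h(R₀)). -/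
open scoped RealInnerProductSpace

/-- Lemma 4 of the paper; Lemma 1 of Ghadimi–Lan–Zhang. Fundamental
inequality for the proximal-gradient step with composite convex part `h`: if `R⁺` minimizes
`u ↦ ⟨g, u⟩ + h(u) + (1/(2η'))‖u − R₀‖²` and `𝒢̃ = (R₀ − R⁺)/η'`, then
`⟨g, 𝒢̃⟩ ≥ ‖𝒢̃‖² + (1/η')(h(R⁺) − h(R₀))`. -/
theorem stmt9 {E : Type*} [NormedAddCommGroup E] [InnerProductSpace ℝ E] [CompleteSpace E]
    (h : E → ℝ) (hconv : ConvexOn ℝ Set.univ h)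
    (η' : ℝ) (hη' : 0 < η') (g R₀ Rplus : E)
    (hmin : ∀ u : E,
      ⟪g, Rplus⟫ + h Rplus + 1 / (2 * η') * ‖Rplus - R₀‖ ^ 2
        ≤ ⟪g, u⟫ + h u + 1 / (2 * η') * ‖u - R₀‖ ^ 2) :
    ‖(1 / η') • (R₀ - Rplus)‖ ^ 2 + 1 / η' * (h Rplus - h R₀)
      ≤ ⟪g, (1 / η') • (R₀ - Rplus)⟫ := by
  set d : E := R₀ - Rplus with hd
  -- key inequality for each t ∈ (0,1]
  have key : ∀ t : ℝ, 0 < t → t ≤ 1 →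
      h Rplus - h R₀ - ⟪g, d⟫ ≤ (t - 2) * (‖d‖ ^ 2 / (2 * η')) := by
    intro t ht ht1
    have hu := hmin (Rplus + t • d)
    have hcomb : Rplus + t • d = (1 - t) • Rplus + t • R₀ := by
      simp [hd, smul_sub, sub_smul]; abel
    have hconv' : h (Rplus + t • d) ≤ (1 - t) * h Rplus + t * h R₀ := by
      rw [hcomb]
      exact hconv.2 (Set.mem_univ _) (Set.mem_univ _) (by linarith) ht.le (by ring)
    have hnorm : ‖Rplus + t • d - R₀‖ ^ 2 = (1 - t) ^ 2 * ‖d‖ ^ 2 := by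
      have : Rplus + t • d - R₀ = (t - 1) • d := by
        simp [hd, smul_sub, sub_smul]; abel
      rw [this, norm_smul, Real.norm_eq_abs, mul_pow, sq_abs]
      ring
    have hinner : ⟪g, Rplus + t • d⟫ = ⟪g, Rplus⟫ + t * ⟪g, d⟫ := by
      rw [inner_add_right, real_inner_smul_right]
    have hRd : Rplus - R₀ = -d := by simp [hd]
    rw [hinner, hnorm, hRd] at hu
    simp only [norm_neg] at hu
    have h2η : (0:ℝ) < 2 * η' := by linarith
    have hceq : 1 / (2 * η') * ‖d‖ ^ 2 = ‖d‖ ^ 2 / (2 * η') := by ring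
    have hceq2 : 1 / (2 * η') * ((1 - t) ^ 2 * ‖d‖ ^ 2)
        = (1 - t) ^ 2 * (‖d‖ ^ 2 / (2 * η')) := by ring
    rw [hceq, hceq2] at hu
    have hmul : t * (h Rplus - h R₀ - ⟪g, d⟫) ≤ t * ((t - 2) * (‖d‖ ^ 2 / (2 * η'))) := by
      nlinarith [hu, hconv']
    exact le_of_mul_le_mul_left (by linarith [hmul]) ht
  -- take t → 0: conclude h Rplus - h R₀ - ⟪g,d⟫ ≤ -2 * (‖d‖²/(2η'))
  set c : ℝ := ‖d‖ ^ 2 / (2 * η') with hc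
  have hc0 : 0 ≤ c := by positivity
  have hlim : h Rplus - h R₀ - ⟪g, d⟫ ≤ -2 * c := by
    apply le_of_forall_pos_le_add
    intro ε hε
    have ht0 : 0 < min 1 (ε / (c + 1)) := lt_min one_pos (by positivity)
    have := key (min 1 (ε / (c + 1))) ht0 (min_le_left _ _)
    have htc : min 1 (ε / (c + 1)) * c ≤ ε := by
      calc min 1 (ε / (c + 1)) * c ≤ (ε / (c + 1)) * c :=
            mul_le_mul_of_nonneg_right (min_le_right _ _) hc0
        _ ≤ ε := by
            rw [div_mul_eq_mul_div, div_le_iff₀ (by linarith)]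
            nlinarith
    nlinarith [this, htc]
  -- now finish
  have hinner : ⟪g, (1 / η') • d⟫ = (1 / η') * ⟪g, d⟫ := real_inner_smul_right _ _ _
  have hnorm : ‖(1 / η') • d‖ ^ 2 = (1 / η') ^ 2 * ‖d‖ ^ 2 := by
    rw [norm_smul, mul_pow, Real.norm_eq_abs, sq_abs]
  rw [hinner, hnorm]
  have hη'2 : 0 < η' ^ 2 := by positivity
  have : h Rplus - h R₀ + ‖d‖ ^ 2 / η' ≤ ⟪g, d⟫ := by
    have : -2 * c = -(‖d‖ ^ 2 / η') := by rw [hc]; field_simp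
    linarith [hlim, this ▸ hlim]
  have h1 : (1 / η') * (h Rplus - h R₀ + ‖d‖ ^ 2 / η') ≤ (1 / η') * ⟪g, d⟫ :=
    mul_le_mul_of_nonneg_left this (by positivity)
  have heq : (1 / η') * (h Rplus - h R₀ + ‖d‖ ^ 2 / η')
      = (1 / η') ^ 2 * ‖d‖ ^ 2 + 1 / η' * (h Rplus - h R₀) := by
    field_simp; ring
  linarith [heq ▸ h1]
end

section
/- Let E be a real Hilbert space, h : E → ℝ a convex function, η' > 0, R₀ ∈ E, and g₁, g₂ ∈ E. For i = 1, 2, suppose R⁺ᵢ ∈ E is a minimizer over E of u ↦ ⟨gᵢ, u⟩ + h(u) + (1/(2η'))‖u − R₀‖², and set 𝒢ᵢ = (R₀ − R⁺ᵢ)/η'. Then ‖𝒢₁ − 𝒢₂‖ ≤ ‖g₁ − g₂‖. -/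
/-!
Each objective `⟪gᵢ, ·⟫ + h + ‖· - R₀‖² / (2η')` is `(1/η')`-strongly convex, so its minimizer
`Rᵢ⁺` beats every `u` by at least `‖u - Rᵢ⁺‖² / (2η')`. Taking for `u` the minimizer of the other
problem and adding the two inequalities cancels `h` and the quadratic terms, leaving
`‖R₁⁺ - R₂⁺‖² / η' ≤ ⟪g₁ - g₂, R₂⁺ - R₁⁺⟫`; Cauchy–Schwarz finishes.
-/

open scoped RealInnerProductSpace

open Set Filter Topology

section

variable {E : Type*} [NormedAddCommGroup E] {s : Set E}

theorem StrongConvexOn.add_mul_sq_norm_sub_le_of_isMinOn [NormedSpace ℝ E] {m : ℝ} {f : E → ℝ}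
    {x y : E} (hf : StrongConvexOn s m f) (hmin : IsMinOn f s x) (hx : x ∈ s) (hy : y ∈ s) :
    f x + m / 2 * ‖y - x‖ ^ 2 ≤ f y := by
  have hseg : ∀ t ∈ Ioo (0 : ℝ) 1, f x + (1 - t) * (m / 2 * ‖x - y‖ ^ 2) ≤ f y := by
    rintro t ⟨ht₀, ht₁⟩
    have hcomb := hf.2 hx hy (sub_nonneg.2 ht₁.le) ht₀.le (sub_add_cancel 1 t)
    have hle : f x ≤ f _ := hmin (hf.1 hx hy (sub_nonneg.2 ht₁.le) ht₀.le (sub_add_cancel 1 t))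
    simp only [smul_eq_mul] at hcomb
    have : t * (f x + (1 - t) * (m / 2 * ‖x - y‖ ^ 2)) ≤ t * f y := by linarith
    exact le_of_mul_le_mul_left this ht₀
  have hlim : Tendsto (fun t : ℝ ↦ f x + (1 - t) * (m / 2 * ‖x - y‖ ^ 2)) (𝓝[>] 0)
      (𝓝 (f x + m / 2 * ‖x - y‖ ^ 2)) :=
    ((by fun_prop : Continuous fun t : ℝ ↦ f x + (1 - t) * (m / 2 * ‖x - y‖ ^ 2)).tendsto' 0 _
      (by simp)).mono_left nhdsWithin_le_nhds
  rw [norm_sub_rev]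
  exact le_of_tendsto hlim (eventually_of_mem (Ioo_mem_nhdsGT one_pos) hseg)

variable [InnerProductSpace ℝ E]

theorem ConvexOn.strongConvexOn_add_mul_sq_norm_sub {f : E → ℝ} (hf : ConvexOn ℝ s f)
    (c : ℝ) (a : E) : StrongConvexOn s (2 * c) fun u ↦ f u + c * ‖u - a‖ ^ 2 := by
  rw [strongConvexOn_iff_convex]
  let L : E →L[ℝ] ℝ := (-(2 * c)) • innerSL ℝ a
  refine ((hf.add (L.toLinearMap.convexOn hf.1)).add_const (c * ‖a‖ ^ 2)).congr fun u _ ↦ ?_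
  simp [L, norm_sub_sq_real, real_inner_comm]
  ring

theorem two_mul_sq_norm_sub_le_inner_of_isMinOn {F : E → ℝ} (hF : ConvexOn ℝ s F) (c : ℝ)
    {a g₁ g₂ x₁ x₂ : E} (hx₁ : x₁ ∈ s) (hx₂ : x₂ ∈ s)
    (hmin₁ : IsMinOn (fun u ↦ ⟪g₁, u⟫ + F u + c * ‖u - a‖ ^ 2) s x₁)
    (hmin₂ : IsMinOn (fun u ↦ ⟪g₂, u⟫ + F u + c * ‖u - a‖ ^ 2) s x₂) :
    2 * c * ‖x₁ - x₂‖ ^ 2 ≤ ⟪g₁ - g₂, x₂ - x₁⟫ := by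
  have hconv (g : E) : StrongConvexOn s (2 * c) fun u ↦ ⟪g, u⟫ + F u + c * ‖u - a‖ ^ 2 :=
    (((innerSL ℝ g).toLinearMap.convexOn hF.1).add hF).strongConvexOn_add_mul_sq_norm_sub c a
  have h₁ := (hconv g₁).add_mul_sq_norm_sub_le_of_isMinOn hmin₁ hx₁ hx₂
  have h₂ := (hconv g₂).add_mul_sq_norm_sub_le_of_isMinOn hmin₂ hx₂ hx₁
  rw [norm_sub_rev x₂ x₁] at h₁
  simp only [inner_sub_left, inner_sub_right]
  linarith

end

theorem stmt10_general {E : Type*} [NormedAddCommGroup E] [InnerProductSpace ℝ E]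
    (h : E → ℝ) (hconv : ConvexOn ℝ Set.univ h)
    (η' : ℝ) (hη' : 0 < η') (R₀ g₁ g₂ Rplus₁ Rplus₂ : E)
    (hmin₁ : ∀ u : E,
      ⟪g₁, Rplus₁⟫ + h Rplus₁ + 1 / (2 * η') * ‖Rplus₁ - R₀‖ ^ 2
        ≤ ⟪g₁, u⟫ + h u + 1 / (2 * η') * ‖u - R₀‖ ^ 2)
    (hmin₂ : ∀ u : E,
      ⟪g₂, Rplus₂⟫ + h Rplus₂ + 1 / (2 * η') * ‖Rplus₂ - R₀‖ ^ 2
        ≤ ⟪g₂, u⟫ + h u + 1 / (2 * η') * ‖u - R₀‖ ^ 2) :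
    ‖(1 / η') • (R₀ - Rplus₁) - (1 / η') • (R₀ - Rplus₂)‖ ≤ ‖g₁ - g₂‖ := by
  have hstrong := two_mul_sq_norm_sub_le_inner_of_isMinOn hconv (1 / (2 * η')) (mem_univ _)
    (mem_univ _) (isMinOn_univ_iff.2 hmin₁) (isMinOn_univ_iff.2 hmin₂)
  have hcs : 1 / η' * ‖Rplus₁ - Rplus₂‖ ^ 2 ≤ ‖g₁ - g₂‖ * ‖Rplus₁ - Rplus₂‖ :=
    calc 1 / η' * ‖Rplus₁ - Rplus₂‖ ^ 2 = 2 * (1 / (2 * η')) * ‖Rplus₁ - Rplus₂‖ ^ 2 := by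
          field_simp
      _ ≤ ⟪g₁ - g₂, Rplus₂ - Rplus₁⟫ := hstrong
      _ ≤ ‖g₁ - g₂‖ * ‖Rplus₂ - Rplus₁‖ := real_inner_le_norm _ _
      _ = ‖g₁ - g₂‖ * ‖Rplus₁ - Rplus₂‖ := by rw [norm_sub_rev Rplus₂]
  rw [← smul_sub, sub_sub_sub_cancel_left, norm_smul, Real.norm_of_nonneg (by positivity),
    norm_sub_rev]
  rcases (norm_nonneg (Rplus₁ - Rplus₂)).eq_or_lt with hzero | hpos
  · rw [← hzero, mul_zero]; positivity
  · exact le_of_mul_le_mul_right (by nlinarith) hpos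

/-- Lemma 5 of the paper; Lemma 2 of Ghadimi–Lan–Zhang. The gradient
mapping of a proximal step is nonexpansive in the linearization vector:
`‖𝒢₁ − 𝒢₂‖ ≤ ‖g₁ − g₂‖`. -/
theorem stmt10 {E : Type*} [NormedAddCommGroup E] [InnerProductSpace ℝ E] [CompleteSpace E]
    (h : E → ℝ) (hconv : ConvexOn ℝ Set.univ h)
    (η' : ℝ) (hη' : 0 < η') (R₀ g₁ g₂ Rplus₁ Rplus₂ : E)
    (hmin₁ : ∀ u : E,
      ⟪g₁, Rplus₁⟫ + h Rplus₁ + 1 / (2 * η') * ‖Rplus₁ - R₀‖ ^ 2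
        ≤ ⟪g₁, u⟫ + h u + 1 / (2 * η') * ‖u - R₀‖ ^ 2)
    (hmin₂ : ∀ u : E,
      ⟪g₂, Rplus₂⟫ + h Rplus₂ + 1 / (2 * η') * ‖Rplus₂ - R₀‖ ^ 2
        ≤ ⟪g₂, u⟫ + h u + 1 / (2 * η') * ‖u - R₀‖ ^ 2) :
    ‖(1 / η') • (R₀ - Rplus₁) - (1 / η') • (R₀ - Rplus₂)‖ ≤ ‖g₁ - g₂‖ :=
  stmt10_general h hconv η' hη' R₀ g₁ g₂ Rplus₁ Rplus₂ hmin₁ hmin₂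
end

section
/- Let E be a real Hilbert space, let F : E → ℝ be differentiable with L₀-Lipschitz gradient, let h : E → ℝ be convex, let η' > 0, and let g, R ∈ E. Suppose R⁺ ∈ E is a minimizer over E of u ↦ ⟨g, u⟩ + h(u) + (1/(2η'))‖u − R‖², and set 𝒢̃ = (R − R⁺)/η'. Then F(R⁺) + h(R⁺) ≤ F(R) + h(R) + (η'²L₀/2 − 3η'/4)‖𝒢̃‖² + η'‖g − ∇F(R)‖². -/
/-!
The smoothness of `F` gives `F R⁺ ≤ F R + ⟪∇F R, R⁺ - R⟫ + L₀/2 ‖R⁺ - R‖²` (the descent lemma).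
The proximal objective `u ↦ ⟪g, u⟫ + h u + ‖u - R‖²/(2η')` is `1/η'`-strongly convex, so comparing
its minimum at `R⁺` with its value at `R` gives
`h R⁺ ≤ h R + ⟪g, R - R⁺⟫ - ‖R⁺ - R‖²/η'`.
Adding the two, the inner products combine to `⟪g - ∇F R, R - R⁺⟫`, which Young's inequality
bounds by `η' ‖g - ∇F R‖² + ‖R - R⁺‖²/(4η')`.
-/

open scoped RealInnerProductSpace

section NormedSpace

variable {E : Type*} [NormedAddCommGroup E] [NormedSpace ℝ E] {s : Set E} {m : ℝ} {f : E → ℝ}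

theorem StrongConvexOn.add_sq_norm_sub_le_of_isMinOn {x y : E} (hf : StrongConvexOn s m f)
    (hmin : IsMinOn f s x) (hx : x ∈ s) (hy : y ∈ s) :
    f x + m / 2 * ‖y - x‖ ^ 2 ≤ f y := by
  -- compare `f x` with `f` at `t • y + (1 - t) • x`, then let `t → 0⁺`
  have hshrink : ∀ t ∈ Set.Ioo (0 : ℝ) 1, f x ≤ f y - (1 - t) * (m / 2 * ‖y - x‖ ^ 2) := by
    rintro t ⟨ht0, ht1⟩
    have hcomb := hf.2 hy hx ht0.le (sub_nonneg.2 ht1.le) (add_sub_cancel t 1)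
    have hle : f x ≤ f (t • y + (1 - t) • x) :=
      hmin (hf.1 hy hx ht0.le (sub_nonneg.2 ht1.le) (add_sub_cancel t 1))
    rw [smul_eq_mul, smul_eq_mul] at hcomb
    have hscaled : t * f x ≤ t * (f y - (1 - t) * (m / 2 * ‖y - x‖ ^ 2)) := by linarith
    exact le_of_mul_le_mul_left hscaled ht0
  set c := m / 2 * ‖y - x‖ ^ 2
  have hlim : Filter.Tendsto (fun t : ℝ ↦ f y - (1 - t) * c) (nhdsWithin 0 (Set.Ioi 0))
      (nhds (f y - c)) := by
    have hcont : Continuous fun t : ℝ ↦ f y - (1 - t) * c := by fun_prop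
    simpa using (hcont.tendsto 0).mono_left nhdsWithin_le_nhds
  have hlimit := ge_of_tendsto hlim (Filter.eventually_of_mem (Ioo_mem_nhdsGT zero_lt_one) hshrink)
  linarith

end NormedSpace

section InnerProductSpace

variable {E : Type*} [NormedAddCommGroup E] [InnerProductSpace ℝ E] {s : Set E} {f : E → ℝ}

theorem ConvexOn.strongConvexOn_add_sq_norm_sub (hf : ConvexOn ℝ s f) (m : ℝ) (c : E) :
    StrongConvexOn s m fun u ↦ f u + m / 2 * ‖u - c‖ ^ 2 := by
  rw [strongConvexOn_iff_convex]
  refine (hf.add (((-m) • innerₛₗ ℝ c).convexOn hf.1) |>.add_const (m / 2 * ‖c‖ ^ 2)).congr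
    fun u _ ↦ ?_
  simp only [Pi.add_apply, LinearMap.smul_apply, innerₛₗ_apply_apply, smul_eq_mul,
    norm_sub_sq_real, real_inner_comm c u]
  ring

theorem real_inner_le_mul_sq_add_sq_div {ε : ℝ} (hε : 0 < ε) (a b : E) :
    ⟪a, b⟫ ≤ ε * ‖a‖ ^ 2 + ‖b‖ ^ 2 / (4 * ε) := by
  have hsq : ε * ‖a‖ ^ 2 + ‖b‖ ^ 2 / (4 * ε) - ‖a‖ * ‖b‖ = (2 * ε * ‖a‖ - ‖b‖) ^ 2 / (4 * ε) := by
    field_simp; ring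
  have : 0 ≤ (2 * ε * ‖a‖ - ‖b‖) ^ 2 / (4 * ε) := by positivity
  linarith [real_inner_le_norm a b]

end InnerProductSpace

section Gradient

variable {E : Type*} [NormedAddCommGroup E] [InnerProductSpace ℝ E] [CompleteSpace E]

theorem HasGradientAt.hasDerivAt_comp_add_smul {f : E → ℝ} {x v f' : E} {t : ℝ}
    (hf : HasGradientAt f f' (x + t • v)) :
    HasDerivAt (fun s : ℝ ↦ f (x + s • v)) ⟪f', v⟫ t := by
  have hline : HasDerivAt (fun s : ℝ ↦ x + s • v) v t := by
    simpa using ((hasDerivAt_id t).smul_const v).const_add x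
  simpa [Function.comp_def] using hf.hasFDerivAt.comp_hasDerivAt t hline

theorem apply_le_add_inner_gradient_add_sq_of_lipschitz_gradient {f : E → ℝ} {L : ℝ}
    (hf : Differentiable ℝ f) (hL : ∀ x y, ‖gradient f x - gradient f y‖ ≤ L * ‖x - y‖)
    (x y : E) :
    f y ≤ f x + ⟪gradient f x, y - x⟫ + L / 2 * ‖y - x‖ ^ 2 := by
  set v := y - x
  -- the gap between `f` and its quadratic upper model along the segment is antitone for `t ≥ 0`
  let φ : ℝ → ℝ := fun t ↦ f (x + t • v) - t * ⟪gradient f x, v⟫ - L / 2 * t ^ 2 * ‖v‖ ^ 2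
  have hφ : ∀ t, HasDerivAt φ
      (⟪gradient f (x + t • v), v⟫ - ⟪gradient f x, v⟫ - L * t * ‖v‖ ^ 2) t := by
    intro t
    have hline : HasDerivAt (fun s : ℝ ↦ f (x + s • v)) ⟪gradient f (x + t • v), v⟫ t :=
      (hf _).hasGradientAt.hasDerivAt_comp_add_smul
    have hlin : HasDerivAt (fun s : ℝ ↦ s * ⟪gradient f x, v⟫) ⟪gradient f x, v⟫ t := by
      simpa using (hasDerivAt_id t).mul_const ⟪gradient f x, v⟫
    have hquad : HasDerivAt (fun s : ℝ ↦ L / 2 * s ^ 2 * ‖v‖ ^ 2) (L * t * ‖v‖ ^ 2) t := by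
      refine (((hasDerivAt_pow 2 t).const_mul (L / 2)).mul_const (‖v‖ ^ 2)).congr_deriv ?_
      push_cast; ring
    exact (hline.sub hlin).sub hquad
  have hφ_nonpos : ∀ t, 0 ≤ t →
      ⟪gradient f (x + t • v), v⟫ - ⟪gradient f x, v⟫ - L * t * ‖v‖ ^ 2 ≤ 0 := by
    intro t ht
    calc ⟪gradient f (x + t • v), v⟫ - ⟪gradient f x, v⟫ - L * t * ‖v‖ ^ 2
        = ⟪gradient f (x + t • v) - gradient f x, v⟫ - L * t * ‖v‖ ^ 2 := by
          rw [inner_sub_left]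
      _ ≤ L * ‖x + t • v - x‖ * ‖v‖ - L * t * ‖v‖ ^ 2 := by
          gcongr
          exact (real_inner_le_norm _ _).trans (by gcongr; exact hL _ _)
      _ = 0 := by
          rw [add_sub_cancel_left, norm_smul, Real.norm_of_nonneg ht]; ring
  have hanti : AntitoneOn φ (Set.Ici 0) :=
    antitoneOn_of_hasDerivWithinAt_nonpos (convex_Ici 0)
      (fun t _ ↦ (hφ t).continuousAt.continuousWithinAt)
      (fun t _ ↦ (hφ t).hasDerivWithinAt)
      (fun t ht ↦ hφ_nonpos t (interior_subset ht))
  have h01 := hanti Set.self_mem_Ici (zero_le_one' ℝ) zero_le_one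
  simp only [φ, zero_smul, add_zero, one_smul, zero_mul, sub_zero, one_mul, one_pow] at h01
  simp only [v, add_sub_cancel] at h01 ⊢
  linarith

end Gradient

/-- inequalities (21)–(22) in the proof of Theorem 1. Composite descent
inequality for an inexact proximal-gradient step:
`F(R⁺) + h(R⁺) ≤ F(R) + h(R) + (η'²L₀/2 − 3η'/4)‖𝒢̃‖² + η'‖g − ∇F(R)‖²`. -/
theorem stmt12 {E : Type*} [NormedAddCommGroup E] [InnerProductSpace ℝ E] [CompleteSpace E]
    (L₀ : ℝ) (Fn : E → ℝ) (hdiff : Differentiable ℝ Fn)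
    (hlip : ∀ x y : E, ‖gradient Fn x - gradient Fn y‖ ≤ L₀ * ‖x - y‖)
    (h : E → ℝ) (hconv : ConvexOn ℝ Set.univ h)
    (η' : ℝ) (hη' : 0 < η') (g R Rplus : E)
    (hmin : ∀ u : E,
      ⟪g, Rplus⟫ + h Rplus + 1 / (2 * η') * ‖Rplus - R‖ ^ 2
        ≤ ⟪g, u⟫ + h u + 1 / (2 * η') * ‖u - R‖ ^ 2) :
    Fn Rplus + h Rplus
      ≤ Fn R + h R + (η' ^ 2 * L₀ / 2 - 3 * η' / 4) * ‖(1 / η') • (R - Rplus)‖ ^ 2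
        + η' * ‖g - gradient Fn R‖ ^ 2 := by
  have hstrong : StrongConvexOn Set.univ (1 / η')
      fun u ↦ (⟪g, u⟫ + h u) + 1 / η' / 2 * ‖u - R‖ ^ 2 :=
    ((innerₛₗ ℝ g).convexOn convex_univ |>.add hconv).strongConvexOn_add_sq_norm_sub _ R
  have hhalf : 1 / (2 * η') = 1 / η' / 2 := by ring
  simp only [hhalf] at hmin
  have hprox := hstrong.add_sq_norm_sub_le_of_isMinOn (fun u _ ↦ hmin u)
    (Set.mem_univ Rplus) (Set.mem_univ R)
  have hdescent := apply_le_add_inner_gradient_add_sq_of_lipschitz_gradient hdiff hlip R Rplus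
  have hyoung := real_inner_le_mul_sq_add_sq_div hη' (g - gradient Fn R) (R - Rplus)
  have hscale : (η' ^ 2 * L₀ / 2 - 3 * η' / 4) * ‖(1 / η') • (R - Rplus)‖ ^ 2
      = (L₀ / 2 - 3 / (4 * η')) * ‖R - Rplus‖ ^ 2 := by
    rw [norm_smul, Real.norm_of_nonneg (by positivity), mul_pow]
    field_simp
  rw [hscale]
  simp only [sub_self, norm_zero, norm_sub_rev Rplus R, inner_sub_left, inner_sub_right]
    at hprox hdescent hyoung
  linear_combination hprox + hdescent + hyoung
end

section
/- Let E be a real Hilbert space, let L₀ > 0, let F : E → ℝ be differentiable with L₀-Lipschitz gradient, let h : E → ℝ be convex, let 0 < η' ≤ 3/(2L₀), and let g, R ∈ E. Suppose R⁺ ∈ E is a minimizer over E of u ↦ ⟨g, u⟩ + h(u) + (1/(2η'))‖u − R‖², and R⁺ₑ ∈ E is a minimizer over E of u ↦ ⟨∇F(R), u⟩ + h(u) + (1/(2η'))‖u − R‖². Set 𝒢̃ = (R − R⁺)/η' and 𝒢 = (R − R⁺ₑ)/η'. Then F(R⁺) + h(R⁺) ≤ F(R) + h(R) + (η'²L₀/4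 − 3η'/8)‖𝒢‖² + (7η'/4 − η'²L₀/2)‖g − ∇F(R)‖². -/
/-! The descent lemma for `F`, together with the optimality of the inexact step `R⁺` tested at
`u = R`, bounds `F(R⁺) + h(R⁺) - F(R) - h(R)` by `‖g - ∇F(R)‖ ‖R⁺ - R‖ + (L₀/2 - 1/η') ‖R⁺ - R‖²`.
The proximal objective is `1/η'`-strongly convex, so its minimiser is `η'`-Lipschitz in the linear
term: `‖R⁺ - R⁺ₑ‖ ≤ η' ‖g - ∇F(R)‖`, whence `η' ‖𝒢‖ ≤ ‖R⁺ - R‖ + η' ‖g - ∇F(R)‖`. For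
`L₀ η' ≤ 3/2` the remaining quadratic form in `(‖R⁺ - R‖, η' ‖g - ∇F(R)‖)` is positive
semidefinite. -/

open scoped RealInnerProductSpace

section

open Set Filter Topology

theorem le_add_deriv_add_half_of_deriv_le {φ φ' : ℝ → ℝ} {K : ℝ}
    (hφ : ∀ t ∈ Icc (0 : ℝ) 1, HasDerivAt φ (φ' t) t)
    (hφ' : ∀ t ∈ Ioo (0 : ℝ) 1, φ' t ≤ φ' 0 + K * t) :
    φ 1 ≤ φ 0 + φ' 0 + K / 2 := by
  set ψ : ℝ → ℝ := fun t ↦ φ 0 + t * φ' 0 + K / 2 * t ^ 2 - φ t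
  have hψ : ∀ t ∈ Icc (0 : ℝ) 1, HasDerivAt ψ (φ' 0 + K * t - φ' t) t := fun t ht ↦ by
    have := ((((hasDerivAt_id t).mul_const (φ' 0)).const_add (φ 0)).add
      (((hasDerivAt_pow 2 t).const_mul (K / 2)))).sub (hφ t ht)
    exact this.congr_deriv (by norm_num; ring)
  have hmono : MonotoneOn ψ (Icc 0 1) := by
    refine monotoneOn_of_hasDerivWithinAt_nonneg (f' := fun t ↦ φ' 0 + K * t - φ' t)
      (convex_Icc 0 1) (fun t ht ↦ (hψ t ht).continuousAt.continuousWithinAt)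
      (fun t ht ↦ ?_) (fun t ht ↦ ?_)
    all_goals rw [interior_Icc] at ht
    · exact (hψ t (Ioo_subset_Icc_self ht)).hasDerivWithinAt
    · linarith [hφ' t ht]
  have := hmono (left_mem_Icc.2 zero_le_one) (right_mem_Icc.2 zero_le_one) zero_le_one
  simp only [ψ] at this
  linarith

variable {E : Type*} [NormedAddCommGroup E] [InnerProductSpace ℝ E]

theorem descent_lemma [CompleteSpace E] {L : ℝ} {f : E → ℝ} (hf : Differentiable ℝ f)
    (hlip : ∀ x y : E, ‖gradient f x - gradient f y‖ ≤ L * ‖x - y‖) (x y : E) :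
    f y ≤ f x + ⟪gradient f x, y - x⟫ + L / 2 * ‖y - x‖ ^ 2 := by
  set d := y - x
  have hline : ∀ t : ℝ,
      HasDerivAt (fun s : ℝ ↦ f (x + s • d)) ⟪gradient f (x + t • d), d⟫ t := by
    intro t
    have hx : HasDerivAt (fun s : ℝ ↦ x + s • d) d t := by
      simpa using ((hasDerivAt_id t).smul_const d).const_add x
    simpa [Function.comp_def, InnerProductSpace.toDual_apply_apply] using
      (hf _).hasGradientAt.hasFDerivAt.comp_hasDerivAt t hx
  have hgrowth : ∀ t ∈ Ioo (0 : ℝ) 1,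
      ⟪gradient f (x + t • d), d⟫ ≤ ⟪gradient f (x + (0 : ℝ) • d), d⟫ + L * ‖d‖ ^ 2 * t := by
    intro t ht
    calc ⟪gradient f (x + t • d), d⟫
        = ⟪gradient f x, d⟫ + ⟪gradient f (x + t • d) - gradient f x, d⟫ := by
          rw [inner_sub_left]; ring
      _ ≤ ⟪gradient f x, d⟫ + ‖gradient f (x + t • d) - gradient f x‖ * ‖d‖ := by
          gcongr; exact real_inner_le_norm _ _
      _ ≤ ⟪gradient f x, d⟫ + L * ‖t • d‖ * ‖d‖ := by
          gcongr; simpa using hlip (x + t • d) x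
      _ = ⟪gradient f (x + (0 : ℝ) • d), d⟫ + L * ‖d‖ ^ 2 * t := by
          rw [norm_smul, Real.norm_of_nonneg ht.1.le, zero_smul, add_zero]; ring
  have := le_add_deriv_add_half_of_deriv_le (fun t _ ↦ hline t) hgrowth
  simp only [zero_smul, one_smul, add_zero, d, add_sub_cancel] at this
  linarith

theorem StrongConvexOn.add_sq_le_of_isMinOn {s : Set E} {m : ℝ} {f : E → ℝ} {P u : E}
    (hf : StrongConvexOn s m f) (hP : IsMinOn f s P) (hPs : P ∈ s) (hu : u ∈ s) :
    f P + m / 2 * ‖u - P‖ ^ 2 ≤ f u := by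
  have hsegment : ∀ t ∈ Ioc (0 : ℝ) 1, f P + (1 - t) * (m / 2 * ‖u - P‖ ^ 2) ≤ f u := by
    intro t ht
    have hconv := hf.2 hPs hu (sub_nonneg.2 ht.2) ht.1.le (sub_add_cancel 1 t)
    have hmin : f P ≤ f _ := hP (hf.1 hPs hu (sub_nonneg.2 ht.2) ht.1.le (sub_add_cancel 1 t))
    rw [norm_sub_rev] at hconv
    simp only [smul_eq_mul] at hconv
    nlinarith [ht.1]
  have hlim : Tendsto (fun t : ℝ ↦ f P + (1 - t) * (m / 2 * ‖u - P‖ ^ 2)) (𝓝[>] 0)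
      (𝓝 (f P + m / 2 * ‖u - P‖ ^ 2)) := by
    apply tendsto_nhdsWithin_of_tendsto_nhds
    have : Continuous (fun t : ℝ ↦ f P + (1 - t) * (m / 2 * ‖u - P‖ ^ 2)) := by fun_prop
    simpa using this.tendsto 0
  exact le_of_tendsto hlim (eventually_of_mem (Ioc_mem_nhdsGT zero_lt_one) hsegment)

/-- Its minimiser is the proximal-gradient step `prox_{η h}(R - η g)`. -/
noncomputable def proxObjective (g : E) (h : E → ℝ) (η : ℝ) (R u : E) : ℝ :=
  ⟪g, u⟫ + h u + 1 / (2 * η) * ‖u - R‖ ^ 2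

section Prox

variable {g R P : E} {h : E → ℝ} {η : ℝ}

theorem strongConvexOn_proxObjective {s : Set E} (hh : ConvexOn ℝ s h) :
    StrongConvexOn s (1 / η) (proxObjective g h η R) := by
  rw [strongConvexOn_iff_convex]
  have haff : ConvexOn ℝ s fun x ↦ ⟪g - (1 / η) • R, x⟫ + 1 / (2 * η) * ‖R‖ ^ 2 :=
    ((innerₛₗ ℝ (g - (1 / η) • R)).convexOn hh.1).add (convexOn_const _ hh.1)
  refine (hh.add haff).congr fun x _ ↦ ?_
  simp only [proxObjective, Pi.add_apply, norm_sub_sq_real, inner_sub_left, real_inner_smul_left,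
    real_inner_comm R x]
  ring

theorem proxObjective_add_sq_le (hh : ConvexOn ℝ univ h)
    (hP : IsMinOn (proxObjective g h η R) univ P) (u : E) :
    proxObjective g h η R P + 1 / (2 * η) * ‖u - P‖ ^ 2 ≤ proxObjective g h η R u := by
  have := (strongConvexOn_proxObjective hh).add_sq_le_of_isMinOn hP (mem_univ P) (mem_univ u)
  rwa [div_div, mul_comm η 2] at this

theorem proxObjective_sufficient_decrease (hh : ConvexOn ℝ univ h)
    (hP : IsMinOn (proxObjective g h η R) univ P) :
    h P + ⟪g, P - R⟫ + 1 / η * ‖P - R‖ ^ 2 ≤ h R := by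
  have := proxObjective_add_sq_le hh hP R
  simp only [proxObjective, sub_self, norm_zero] at this
  rw [inner_sub_right, norm_sub_rev R P] at *
  linear_combination this

theorem norm_sub_le_of_isMinOn_proxObjective {g₁ g₂ P₁ P₂ : E} (hh : ConvexOn ℝ univ h)
    (hη : 0 < η) (hP₁ : IsMinOn (proxObjective g₁ h η R) univ P₁)
    (hP₂ : IsMinOn (proxObjective g₂ h η R) univ P₂) :
    ‖P₁ - P₂‖ ≤ η * ‖g₁ - g₂‖ := by
  have h₁ := proxObjective_add_sq_le hh hP₁ P₂
  have h₂ := proxObjective_add_sq_le hh hP₂ P₁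
  simp only [proxObjective] at h₁ h₂
  have hmono : 1 / η * ‖P₁ - P₂‖ ^ 2 ≤ ⟪g₁ - g₂, P₂ - P₁⟫ := by
    rw [norm_sub_rev P₂ P₁] at h₁
    rw [inner_sub_left, inner_sub_right, inner_sub_right]
    linear_combination h₁ + h₂
  have hcs : ⟪g₁ - g₂, P₂ - P₁⟫ ≤ ‖g₁ - g₂‖ * ‖P₁ - P₂‖ := by
    rw [norm_sub_rev P₁ P₂]
    exact real_inner_le_norm _ _
  have hsq : ‖P₁ - P₂‖ ^ 2 ≤ η * ‖g₁ - g₂‖ * ‖P₁ - P₂‖ := by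
    have := mul_le_mul_of_nonneg_left (hmono.trans hcs) hη.le
    rwa [← mul_assoc, mul_one_div_cancel hη.ne', one_mul, ← mul_assoc] at this
  nlinarith [norm_nonneg (P₁ - P₂), mul_nonneg hη.le (norm_nonneg (g₁ - g₂))]

end Prox

theorem inexact_descent_scalar_bound {L η D e G : ℝ} (hη : 0 < η) (hLη : L * η ≤ 3 / 2)
    (hG : 0 ≤ G) (hGDe : η * G ≤ D + η * e) :
    e * D + (L / 2 - 1 / η) * D ^ 2
      ≤ (η ^ 2 * L / 4 - 3 * η / 8) * G ^ 2 + (7 * η / 4 - η ^ 2 * L / 2) * e ^ 2 := by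
  set a := L * η
  -- positive semidefinite: its discriminant is `(a - 3/2) / 4 ≤ 0`
  have hform :
      0 ≤ (5/8 - a/4) * D ^ 2 - (7/4 - a/2) * D * (η * e) + (11/8 - a/4) * (η * e) ^ 2 := by
    refine nonneg_of_mul_nonneg_right ?_ (by linarith : (0 : ℝ) < 5/8 - a/4)
    have hsos : (5/8 - a/4) * ((5/8 - a/4) * D ^ 2 - (7/4 - a/2) * D * (η * e)
        + (11/8 - a/4) * (η * e) ^ 2)
        = ((5/8 - a/4) * D - (7/8 - a/4) * (η * e)) ^ 2 + (3/2 - a) / 16 * (η * e) ^ 2 := by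
      ring
    rw [hsos]
    exact add_nonneg (sq_nonneg _) (mul_nonneg (by linarith) (sq_nonneg _))
  have hGsq : (η * G) ^ 2 ≤ (D + η * e) ^ 2 := pow_le_pow_left₀ (by positivity) hGDe 2
  refine le_of_mul_le_mul_left ?_ hη
  calc η * (e * D + (L / 2 - 1 / η) * D ^ 2)
      = (η * e) * D + (a / 2 - 1) * D ^ 2 := by field_simp; ring
    _ ≤ (a / 4 - 3 / 8) * (D + η * e) ^ 2 + (7 / 4 - a / 2) * (η * e) ^ 2 := by
      linear_combination hform
    _ ≤ (a / 4 - 3 / 8) * (η * G) ^ 2 + (7 / 4 - a / 2) * (η * e) ^ 2 := by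
      gcongr ?_ + _
      exact mul_le_mul_of_nonpos_left hGsq (by linarith)
    _ = η * ((η ^ 2 * L / 4 - 3 * η / 8) * G ^ 2 + (7 * η / 4 - η ^ 2 * L / 2) * e ^ 2) := by
      ring

end

/-- inequality (25) in the proof of Theorem 1. Composite descent inequality
in terms of the exact gradient mapping `𝒢`: with `0 < η' ≤ 3/(2L₀)`,
`F(R⁺) + h(R⁺) ≤ F(R) + h(R) + (η'²L₀/4 − 3η'/8)‖𝒢‖² + (7η'/4 − η'²L₀/2)‖g − ∇F(R)‖²`. -/
theorem stmt13 {E : Type*} [NormedAddCommGroup E] [InnerProductSpace ℝ E] [CompleteSpace E]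
    (L₀ : ℝ) (hL₀ : 0 < L₀)
    (Fn : E → ℝ) (hdiff : Differentiable ℝ Fn)
    (hlip : ∀ x y : E, ‖gradient Fn x - gradient Fn y‖ ≤ L₀ * ‖x - y‖)
    (h : E → ℝ) (hconv : ConvexOn ℝ Set.univ h)
    (η' : ℝ) (hη' : 0 < η') (hη'le : η' ≤ 3 / (2 * L₀))
    (g R Rplus RplusE : E)
    (hmin : ∀ u : E,
      ⟪g, Rplus⟫ + h Rplus + 1 / (2 * η') * ‖Rplus - R‖ ^ 2
        ≤ ⟪g, u⟫ + h u + 1 / (2 * η') * ‖u - R‖ ^ 2)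
    (hminE : ∀ u : E,
      ⟪gradient Fn R, RplusE⟫ + h RplusE + 1 / (2 * η') * ‖RplusE - R‖ ^ 2
        ≤ ⟪gradient Fn R, u⟫ + h u + 1 / (2 * η') * ‖u - R‖ ^ 2) :
    Fn Rplus + h Rplus
      ≤ Fn R + h R + (η' ^ 2 * L₀ / 4 - 3 * η' / 8) * ‖(1 / η') • (R - RplusE)‖ ^ 2
        + (7 * η' / 4 - η' ^ 2 * L₀ / 2) * ‖g - gradient Fn R‖ ^ 2 := by
  have hP : IsMinOn (proxObjective g h η' R) Set.univ Rplus := fun u _ ↦ hmin u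
  have hPE : IsMinOn (proxObjective (gradient Fn R) h η' R) Set.univ RplusE :=
    fun u _ ↦ hminE u
  have hdesc := descent_lemma hdiff hlip R Rplus
  have hdecr := proxObjective_sufficient_decrease hconv hP
  have hcross : ⟪gradient Fn R - g, Rplus - R⟫ ≤ ‖g - gradient Fn R‖ * ‖Rplus - R‖ := by
    rw [← norm_neg (g - gradient Fn R), neg_sub]
    exact real_inner_le_norm _ _
  have hmap : η' * ‖(1 / η') • (R - RplusE)‖ ≤ ‖Rplus - R‖ + η' * ‖g - gradient Fn R‖ := by
    rw [norm_smul, Real.norm_of_nonneg (by positivity), ← mul_assoc, mul_one_div_cancel hη'.ne',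
      one_mul, norm_sub_rev Rplus R]
    calc ‖R - RplusE‖ ≤ ‖R - Rplus‖ + ‖Rplus - RplusE‖ := norm_sub_le_norm_sub_add_norm_sub _ _ _
      _ ≤ ‖R - Rplus‖ + η' * ‖g - gradient Fn R‖ := by
        gcongr
        exact norm_sub_le_of_isMinOn_proxObjective hconv hη' hP hPE
  have hLη : L₀ * η' ≤ 3 / 2 := by
    rw [le_div_iff₀ (by positivity)] at hη'le
    linarith
  have hscalar := inexact_descent_scalar_bound hη' hLη (norm_nonneg _) hmap
  rw [inner_sub_left] at hcross
  linear_combination hdesc + hdecr + hcross + hscalar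
end

section
/- Let E be a real Hilbert space, let F : E → ℝ be differentiable, let h : E → ℝ be convex, let η' > 0, and let g, R ∈ E. Suppose R⁺ ∈ E is a minimizer over E of u ↦ ⟨g, u⟩ + h(u) + (1/(2η'))‖u − R‖², and R⁺ₑ ∈ E is a minimizer over E of u ↦ ⟨∇F(R), u⟩ + h(u) + (1/(2η'))‖u − R‖². Set 𝒢̃ = (R − R⁺)/η' and 𝒢 = (R − R⁺ₑ)/η'. Then ‖𝒢‖² ≤ 2‖𝒢̃‖² + 2‖g − ∇F(R)‖². -/
open scoped RealInnerProductSpace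

private lemma key_opt {E : Type*} [NormedAddCommGroup E] [InnerProductSpace ℝ E]
    (h : E → ℝ) (hconv : ConvexOn ℝ Set.univ h)
    (η' : ℝ) (hη' : 0 < η') (w R a b : E)
    (hmin : ∀ u : E,
      ⟪w, a⟫ + h a + 1 / (2 * η') * ‖a - R‖ ^ 2
        ≤ ⟪w, u⟫ + h u + 1 / (2 * η') * ‖u - R‖ ^ 2) :
    0 ≤ ⟪w, b - a⟫ + (1 / η') * ⟪a - R, b - a⟫ + (h b - h a) := by
  set d := b - a with hd
  set A := ⟪w, d⟫ + (1 / η') * ⟪a - R, d⟫ + (h b - h a) with hA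
  set B := ‖d‖ ^ 2 / (2 * η') with hB
  have hBnn : 0 ≤ B := by positivity
  have hstep : ∀ t : ℝ, 0 < t → t ≤ 1 → 0 ≤ A + B * t := by
    intro t ht0 ht1
    have hpt : (1 - t) • a + t • b = a + t • d := by
      rw [hd]; module
    have hcv : h (a + t • d) ≤ (1 - t) * h a + t * h b := by
      have := hconv.2 (Set.mem_univ a) (Set.mem_univ b)
        (by linarith : (0:ℝ) ≤ 1 - t) (le_of_lt ht0) (by ring)
      rwa [hpt] at this
    have hinner : ⟪w, a + t • d⟫ = ⟪w, a⟫ + t * ⟪w, d⟫ := by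
      rw [inner_add_right, real_inner_smul_right]
    have hnorm : ‖a + t • d - R‖ ^ 2
        = ‖a - R‖ ^ 2 + 2 * t * ⟪a - R, d⟫ + t ^ 2 * ‖d‖ ^ 2 := by
      have : a + t • d - R = (a - R) + t • d := by abel
      rw [this, norm_add_sq_real, real_inner_smul_right, norm_smul,
        Real.norm_eq_abs, mul_pow, sq_abs]
      ring
    have hm := hmin (a + t • d)
    rw [hinner, hnorm] at hm
    have hA' : 0 ≤ t * ⟪w, d⟫ + (h (a + t • d) - h a)
        + 1 / (2 * η') * (2 * t * ⟪a - R, d⟫ + t ^ 2 * ‖d‖ ^ 2) := by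
      nlinarith [hm]
    have hη'' : (0:ℝ) < 2 * η' := by linarith
    rw [hA, hB]
    have hne : (2 * η') ≠ 0 := ne_of_gt hη''
    have h1 : 0 ≤ t * ⟪w, d⟫ + t * (h b - h a)
        + 1 / (2 * η') * (2 * t * ⟪a - R, d⟫ + t ^ 2 * ‖d‖ ^ 2) := by
      nlinarith [hA', hcv]
    -- divide by t
    have heq : t * (A + B * t)
        = t * ⟪w, d⟫ + t * (h b - h a)
          + 1 / (2 * η') * (2 * t * ⟪a - R, d⟫ + t ^ 2 * ‖d‖ ^ 2) := by
      rw [hA, hB]; field_simp; ring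
    have h1' : t * 0 ≤ t * (A + B * t) := by
      rw [mul_zero, heq]; exact h1
    exact le_of_mul_le_mul_left h1' ht0
  by_contra hcon
  push_neg at hcon
  clear_value A B
  rcases eq_or_lt_of_le hBnn with hB0 | hBpos
  · have := hstep 1 one_pos le_rfl
    rw [← hB0] at this; linarith
  · have htpos : 0 < -A / (2 * B) := div_pos (by linarith) (by linarith)
    set t := min 1 (-A / (2 * B)) with htd
    have ht0 : 0 < t := lt_min one_pos htpos
    have ht1 : t ≤ 1 := min_le_left _ _
    have hts : t ≤ -A / (2 * B) := min_le_right _ _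
    clear_value t
    have := hstep t ht0 ht1
    have hBt : B * t ≤ B * (-A / (2 * B)) := by
      exact mul_le_mul_of_nonneg_left hts hBnn
    have heq2 : B * (-A / (2 * B)) = -A / 2 := by
      field_simp
    have hBt2 : B * t ≤ -A / 2 := heq2 ▸ hBt
    nlinarith [hstep t ht0 ht1, hBt2]

/-- inequality (23) in the proof of Theorem 1. The exact gradient mapping
is controlled by the inexact one plus the gradient-approximation error:
`‖𝒢‖² ≤ 2‖𝒢̃‖² + 2‖g − ∇F(R)‖²`. -/
theorem stmt14 {E : Type*} [NormedAddCommGroup E] [InnerProductSpace ℝ E] [CompleteSpace E]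
    (Fn : E → ℝ) (hdiff : Differentiable ℝ Fn)
    (h : E → ℝ) (hconv : ConvexOn ℝ Set.univ h)
    (η' : ℝ) (hη' : 0 < η') (g R Rplus RplusE : E)
    (hmin : ∀ u : E,
      ⟪g, Rplus⟫ + h Rplus + 1 / (2 * η') * ‖Rplus - R‖ ^ 2
        ≤ ⟪g, u⟫ + h u + 1 / (2 * η') * ‖u - R‖ ^ 2)
    (hminE : ∀ u : E,
      ⟪gradient Fn R, RplusE⟫ + h RplusE + 1 / (2 * η') * ‖RplusE - R‖ ^ 2
        ≤ ⟪gradient Fn R, u⟫ + h u + 1 / (2 * η') * ‖u - R‖ ^ 2) :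
    ‖(1 / η') • (R - RplusE)‖ ^ 2
      ≤ 2 * ‖(1 / η') • (R - Rplus)‖ ^ 2 + 2 * ‖g - gradient Fn R‖ ^ 2 := by
  set v := gradient Fn R with hv
  set d := RplusE - Rplus with hd
  have k1 := key_opt h hconv η' hη' g R Rplus RplusE hmin
  have k2 := key_opt h hconv η' hη' v R RplusE Rplus hminE
  rw [← hd] at k1
  -- rewrite k2 in terms of d
  have hsub : Rplus - RplusE = -d := by rw [hd]; abel
  have k2' : 0 ≤ -⟪v, d⟫ + (1 / η') * ⟪RplusE - R, -d⟫ + (h Rplus - h RplusE) := by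
    rw [hsub] at k2
    rwa [inner_neg_right] at k2
  rw [inner_neg_right] at k2'
  -- sum
  have hsum : (1 / η') * ‖d‖ ^ 2 ≤ ⟪g - v, d⟫ := by
    have e1 : ⟪g - v, d⟫ = ⟪g, d⟫ - ⟪v, d⟫ := inner_sub_left _ _ _
    have e2 : ⟪Rplus - R, d⟫ - ⟪RplusE - R, d⟫ = -‖d‖ ^ 2 := by
      rw [← inner_sub_left]
      have : Rplus - R - (RplusE - R) = -d := by rw [hd]; abel
      rw [this, inner_neg_left, real_inner_self_eq_norm_sq]
    have e2' : (1 / η') * ⟪Rplus - R, d⟫ - (1 / η') * ⟪RplusE - R, d⟫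
        = -((1 / η') * ‖d‖ ^ 2) := by linear_combination (1 / η') * e2
    linarith [k1, k2', e1, e2']
  have hCS : ⟪g - v, d⟫ ≤ ‖g - v‖ * ‖d‖ := real_inner_le_norm _ _
  have hdle : ‖d‖ ≤ η' * ‖g - v‖ := by
    rcases eq_or_lt_of_le (norm_nonneg d) with h0 | hpos
    · rw [← h0]; positivity
    · have h1 : (1 / η') * ‖d‖ ^ 2 ≤ ‖g - v‖ * ‖d‖ := le_trans hsum hCS
      have h2 : ‖d‖ ^ 2 ≤ η' * (‖g - v‖ * ‖d‖) := by
        have h3 := mul_le_mul_of_nonneg_left h1 hη'.le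
        have h4 : η' * ((1 / η') * ‖d‖ ^ 2) = ‖d‖ ^ 2 := by
          field_simp
        linarith [h3, h4.le, h4.ge]
      nlinarith [h2, hpos, mul_pos hpos hpos]
  -- final
  have hRE : R - RplusE = (R - Rplus) + -d := by rw [hd]; abel
  have htri : ‖R - RplusE‖ ≤ ‖R - Rplus‖ + ‖d‖ := by
    rw [hRE]
    calc ‖(R - Rplus) + -d‖ ≤ ‖R - Rplus‖ + ‖-d‖ := norm_add_le _ _
    _ = ‖R - Rplus‖ + ‖d‖ := by rw [norm_neg]
  have hn1 : ‖(1 / η') • (R - RplusE)‖ = (1 / η') * ‖R - RplusE‖ := by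
    rw [norm_smul, Real.norm_eq_abs, abs_of_pos (by positivity)]
  have hn2 : ‖(1 / η') • (R - Rplus)‖ = (1 / η') * ‖R - Rplus‖ := by
    rw [norm_smul, Real.norm_eq_abs, abs_of_pos (by positivity)]
  rw [hn1, hn2]
  have hη0 : η' ≠ 0 := ne_of_gt hη'
  have hX : 0 ≤ ‖R - Rplus‖ := norm_nonneg _
  have hE : 0 ≤ ‖g - v‖ := norm_nonneg _
  have hD : 0 ≤ ‖d‖ := norm_nonneg _
  have hsq : ‖R - RplusE‖ ^ 2 ≤ 2 * ‖R - Rplus‖ ^ 2 + 2 * η' ^ 2 * ‖g - v‖ ^ 2 := by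
    have s1 : ‖R - RplusE‖ ^ 2 ≤ (‖R - Rplus‖ + ‖d‖) ^ 2 :=
      pow_le_pow_left₀ (norm_nonneg _) htri 2
    have s2 : ‖d‖ ^ 2 ≤ (η' * ‖g - v‖) ^ 2 := pow_le_pow_left₀ hD hdle 2
    nlinarith [s1, s2, sq_nonneg (‖R - Rplus‖ - ‖d‖)]
  rw [mul_pow, mul_pow]
  calc (1 / η') ^ 2 * ‖R - RplusE‖ ^ 2
      ≤ (1 / η') ^ 2 * (2 * ‖R - Rplus‖ ^ 2 + 2 * η' ^ 2 * ‖g - v‖ ^ 2) :=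
        mul_le_mul_of_nonneg_left hsq (by positivity)
    _ = 2 * ((1 / η') ^ 2 * ‖R - Rplus‖ ^ 2) + 2 * ‖g - v‖ ^ 2 := by
        field_simp
end
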